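/- arXiv:2510.23298 — 5 statements merged into one kernel-verified Lean document; each statement's English description precedes it below -/
import Mathlib

section
/- For every prime p and integers n, ℓ with 0 ≤ ℓ < p, the Apéry numbers satisfy α_{np+ℓ} ≡ α_n · α_ℓ (mod p), where α_m = Σ_{k=0}^m C(m,k)² C(m+k,m)². -/
/-- The Apéry numbers `α_m = ∑_{k=0}^m C(m,k)² C(m+k,m)²`. -/
def apery (m : ℕ) : ℕ := ∑ k ∈ Finset.range (m + 1), (m.choose k) ^ 2 * ((m + k).choose m) ^ 2

/-!
Split the summation index of `α_{np+ℓ}` into base-`p` digits, `k = jp + i`. By Lucas' theorem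
the summand then factors modulo `p` into the `j`-th summand of `α_n` times the `i`-th summand of
`α_ℓ`. In the carry case `ℓ + i ≥ p` both sides vanish, since the low base-`p` digit `ℓ + i - p`
of `(n + j)p + ℓ + i` is smaller than `ℓ`. The double sum is therefore the product `α_n α_ℓ`.
-/

open Finset

theorem Finset.sum_range_mul {M : Type*} [AddCommMonoid M] (f : ℕ → M) (a b : ℕ) :
    ∑ k ∈ range (a * b), f k = ∑ j ∈ range a, ∑ i ∈ range b, f (j * b + i) := by
  induction a with
  | zero => simp
  | succ a ih => rw [add_mul, one_mul, sum_range_add, ih, sum_range_succ]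

section Lucas

variable {p : ℕ} [Fact p.Prime]

theorem ZMod.natCast_choose_mul_add_mul_add (a b c d : ℕ) (hb : b < p) (hd : d < p) :
    ((a * p + b).choose (c * p + d) : ZMod p) = a.choose c * b.choose d := by
  have hp : 0 < p := (Fact.out : p.Prime).pos
  have hdiv (x y : ℕ) (hy : y < p) : (x * p + y) / p = x := by
    rw [Nat.add_comm, Nat.add_mul_div_right _ _ hp, Nat.div_eq_of_lt hy, zero_add]
  have lucas := Choose.choose_modEq_choose_mod_mul_choose_div_nat (p := p)
    (n := a * p + b) (k := c * p + d)
  rw [Nat.mul_add_mod_self_right, Nat.mod_eq_of_lt hb, Nat.mul_add_mod_self_right,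
    Nat.mod_eq_of_lt hd, hdiv a b hb, hdiv c d hd] at lucas
  rw [(ZMod.natCast_eq_natCast_iff _ _ _).mpr lucas, Nat.cast_mul, mul_comm]

theorem ZMod.natCast_choose_mul_add_add (a c ℓ i : ℕ) (hℓ : ℓ < p) (hi : i < p) :
    ((a * p + (ℓ + i)).choose (c * p + ℓ) : ZMod p) = a.choose c * (ℓ + i).choose ℓ := by
  rcases lt_or_ge (ℓ + i) p with hlt | hge
  · exact ZMod.natCast_choose_mul_add_mul_add a (ℓ + i) c ℓ hlt hℓ
  have hdigit : (ℓ + i - p).choose ℓ = 0 := Nat.choose_eq_zero_of_lt (by omega)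
  have hlow : ((ℓ + i).choose ℓ : ZMod p) = 0 := by
    have := ZMod.natCast_choose_mul_add_mul_add 1 (ℓ + i - p) 0 ℓ (by omega) hℓ
    rwa [hdigit, Nat.cast_zero, mul_zero, one_mul, zero_mul, zero_add,
      Nat.add_sub_cancel' hge] at this
  have hhigh : a * p + (ℓ + i) = (a + 1) * p + (ℓ + i - p) := by
    rw [add_mul, one_mul]; omega
  rw [hlow, mul_zero, hhigh, ZMod.natCast_choose_mul_add_mul_add _ _ _ _ (by omega) hℓ,
    hdigit, Nat.cast_zero, mul_zero]

end Lucas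

def aperyTerm (m k : ℕ) : ℕ := m.choose k ^ 2 * (m + k).choose m ^ 2

theorem apery_eq_sum_range_of_lt {m N : ℕ} (hN : m < N) :
    apery m = ∑ k ∈ range N, aperyTerm m k := by
  show ∑ k ∈ range (m + 1), aperyTerm m k = _
  refine sum_subset (range_subset_range.2 hN) fun k _ hkm => ?_
  rw [aperyTerm, Nat.choose_eq_zero_of_lt (by rw [mem_range] at hkm; omega),
    zero_pow two_ne_zero, zero_mul]

theorem ZMod.natCast_aperyTerm_mul_add_mul_add {p : ℕ} [Fact p.Prime] (n j : ℕ) {ℓ i : ℕ}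
    (hℓ : ℓ < p) (hi : i < p) :
    (aperyTerm (n * p + ℓ) (j * p + i) : ZMod p) = aperyTerm n j * aperyTerm ℓ i := by
  have hsum : n * p + ℓ + (j * p + i) = (n + j) * p + (ℓ + i) := by ring
  simp only [aperyTerm, Nat.cast_mul, Nat.cast_pow]
  rw [hsum, ZMod.natCast_choose_mul_add_mul_add n ℓ j i hℓ hi,
    ZMod.natCast_choose_mul_add_add (n + j) n ℓ i hℓ hi]
  ring

theorem apery_lucas (p : ℕ) (hp : p.Prime) (n ℓ : ℕ) (hℓ : ℓ < p) :
    (apery (n * p + ℓ) : ZMod p) = (apery n : ZMod p) * (apery ℓ : ZMod p) := by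
  have : Fact p.Prime := ⟨hp⟩
  have hN : n * p + ℓ < (n + 1) * p := by rw [add_mul, one_mul]; omega
  rw [apery_eq_sum_range_of_lt hN, sum_range_mul, apery_eq_sum_range_of_lt n.lt_add_one,
    apery_eq_sum_range_of_lt hℓ]
  push_cast
  rw [sum_mul_sum]
  exact sum_congr rfl fun j _ => sum_congr rfl fun i hi =>
    ZMod.natCast_aperyTerm_mul_add_mul_add n j hℓ (mem_range.1 hi)
end

section
/- For every prime p and integers n, ℓ with 0 ≤ ℓ < p, the Franel numbers satisfy F_{np+ℓ} ≡ F_n · F_ℓ (mod p), where F_m = Σ_{k=0}^m C(m,k)³. -/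
/-- The Franel numbers `F_m = ∑_{k=0}^m C(m,k)³`. -/
def franel (m : ℕ) : ℕ := ∑ k ∈ Finset.range (m + 1), (m.choose k) ^ 3

/-!
By Lucas' theorem, `C(np+ℓ, ip+j) ≡ C(n,i) C(ℓ,j) (mod p)` whenever `ℓ, j < p`. The terms of
`∑_k C(np+ℓ,k)^r` with `k > np+ℓ` vanish, so the sum may be taken over `k < (n+1)p`; writing
`k = ip + j` with `j < p`, it factors modulo `p` as `(∑_i C(n,i)^r) (∑_{j<p} C(ℓ,j)^r)`, and the
second factor is again a full power sum because `C(ℓ,j) = 0` for `ℓ < j < p`. Franel numbers are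
the case `r = 3`.
-/

open Finset

theorem Finset.sum_range_mul_eq_sum_sum {M : Type*} [AddCommMonoid M] (f : ℕ → M) (m n : ℕ) :
    ∑ k ∈ range (m * n), f k = ∑ i ∈ range m, ∑ j ∈ range n, f (i * n + j) := by
  induction m with
  | zero => simp
  | succ m ih => rw [Nat.succ_mul, sum_range_add, ih, sum_range_succ]

theorem Choose.choose_mul_add_mul_add_cast {p : ℕ} [Fact p.Prime] (n i : ℕ) {ℓ j : ℕ}
    (hℓ : ℓ < p) (hj : j < p) :
    ((n * p + ℓ).choose (i * p + j) : ZMod p) = n.choose i * ℓ.choose j := by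
  have div_eq (a : ℕ) {c : ℕ} (hc : c < p) : (a * p + c) / p = a := by
    rw [mul_comm, Nat.mul_add_div (Fact.out : p.Prime).pos, Nat.div_eq_of_lt hc, add_zero]
  have lucas := (Choose.choose_modEq_choose_mod_mul_choose_div_nat (n := n * p + ℓ)
    (k := i * p + j) (p := p))
  rw [Nat.mul_add_mod_of_lt hℓ, Nat.mul_add_mod_of_lt hj, div_eq n hℓ,
    div_eq i hj] at lucas
  rw [(ZMod.natCast_eq_natCast_iff _ _ _).mpr lucas]
  push_cast
  ring

def binomPowerSum (r m : ℕ) : ℕ := ∑ k ∈ range (m + 1), m.choose k ^ r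

theorem binomPowerSum_eq_sum_range {r m N : ℕ} (hr : r ≠ 0) (hN : m < N) :
    binomPowerSum r m = ∑ k ∈ range N, m.choose k ^ r := by
  refine sum_subset (range_subset_range.mpr hN) fun k _ hk => ?_
  rw [Nat.choose_eq_zero_of_lt (by simpa using hk), zero_pow hr]

theorem binomPowerSum_mul_add_cast {p : ℕ} [Fact p.Prime] {r : ℕ} (hr : r ≠ 0) (n : ℕ) {ℓ : ℕ}
    (hℓ : ℓ < p) :
    (binomPowerSum r (n * p + ℓ) : ZMod p) = binomPowerSum r n * binomPowerSum r ℓ := by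
  rw [binomPowerSum_eq_sum_range hr (N := (n + 1) * p) (by nlinarith),
    binomPowerSum_eq_sum_range hr (N := p) hℓ, binomPowerSum, sum_range_mul_eq_sum_sum]
  push_cast
  rw [sum_mul_sum]
  refine sum_congr rfl fun i _ => sum_congr rfl fun j hj => ?_
  rw [Choose.choose_mul_add_mul_add_cast n i hℓ (mem_range.mp hj), mul_pow]

theorem franel_lucas (p : ℕ) (hp : p.Prime) (n ℓ : ℕ) (hℓ : ℓ < p) :
    (franel (n * p + ℓ) : ZMod p) = (franel n : ZMod p) * (franel ℓ : ZMod p) := by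
  have : Fact p.Prime := ⟨hp⟩
  exact binomPowerSum_mul_add_cast three_ne_zero n hℓ
end

section
/- Let p > 13 be a prime. The truncated Franel polynomial H = Σ_{n=0}^{p-1} F_n xⁿ ∈ F_p[x] is not of the form (x - 1/8)^m (x+1)^{p-1-m} for any 0 ≤ m ≤ p-1. -/
/-! The coefficients of `1, x, x²` in `H` are `F₀, F₁, F₂ = 1, 2, 10`, and these already rule out
the factorisation. Write `n = p - 1 - m`, so `m + n ≡ -1 (mod p)`. The constant term forces
`(-1/8)^m = 1`, after which the right-hand side is `(1 - 8x)^m (1 + x)^n`. Its `x`-coefficient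
`n - 8m = 2` gives `9m + 3 = 0` and its `x²`-coefficient gives `81m² - 45m - 18 = 0`; since
`81m² - 45m - 18 = (9m + 3)(9m - 8) + 6`, this forces `6 = 0` in `𝔽_p`. -/

open Polynomial Finset

theorem Polynomial.coeff_sum_range_C_mul_X_pow {R : Type*} [Semiring R] (c : ℕ → R)
    {N j : ℕ} (hj : j < N) : (∑ n ∈ range N, C (c n) * X ^ n).coeff j = c j := by
  simp [coeff_X_pow, hj]

theorem Polynomial.coeff_X_add_C_pow_of_ne_zero {K : Type*} [Field K] {u : K} (hu : u ≠ 0)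
    (m k : ℕ) : ((X + C u) ^ m).coeff k = u ^ m * u⁻¹ ^ k * m.choose k := by
  rw [coeff_X_add_C_pow]
  rcases le_or_gt k m with hkm | hmk
  · rw [pow_sub₀ u hu hkm, inv_pow]
  · simp [Nat.choose_eq_zero_of_lt hmk]

theorem Polynomial.mul_coeff_two {R : Type*} [Semiring R] (f g : R[X]) :
    (f * g).coeff 2 =
      f.coeff 0 * g.coeff 2 + f.coeff 1 * g.coeff 1 + f.coeff 2 * g.coeff 0 := by
  simp [coeff_mul, Nat.antidiagonal_succ, add_assoc]

theorem six_eq_zero_of_coeff_X_sub_C_inv_eight_pow_mul_X_add_one_pow {K : Type*} [Field K]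
    {m n : ℕ} (hmn : (m + n + 1 : K) = 0)
    (h0 : ((X - C 8⁻¹) ^ m * (X + 1) ^ n : K[X]).coeff 0 = 1)
    (h1 : ((X - C 8⁻¹) ^ m * (X + 1) ^ n : K[X]).coeff 1 = 2)
    (h2 : ((X - C 8⁻¹) ^ m * (X + 1) ^ n : K[X]).coeff 2 = 10) : (6 : K) = 0 := by
  by_cases htwo : (2 : K) = 0
  · linear_combination 3 * htwo
  have : NeZero (2 : K) := ⟨htwo⟩
  set u : K := -8⁻¹
  have hX : X - C 8⁻¹ = X + C u := by rw [sub_eq_add_neg, C_neg]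
  have hu : u ≠ 0 := neg_ne_zero.mpr (inv_ne_zero (by
    simpa [show (8 : K) = 2 ^ 3 by norm_num] using htwo))
  rw [hX] at h0 h1 h2
  have hum : u ^ m = 1 := by
    simpa [mul_coeff_zero, coeff_X_add_C_pow_of_ne_zero hu, coeff_X_add_one_pow] using h0
  have hcoeff (k : ℕ) : ((X + C u) ^ m).coeff k = (-8 : K) ^ k * m.choose k := by
    rw [coeff_X_add_C_pow_of_ne_zero hu, hum, one_mul, inv_neg, inv_inv]
  simp only [mul_coeff_one, mul_coeff_two, hcoeff, coeff_X_add_one_pow,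
    Nat.choose_zero_right, Nat.choose_one_right, Nat.cast_choose_two] at h1 h2
  have hn : (n : K) = -1 - m := by linear_combination hmn
  rw [hn] at h1 h2
  field_simp at h2
  linear_combination h2 + (9 * m - 8) * h1

open Polynomial in
theorem franel_truncation_not_product_of_linears (p : ℕ) (hp : p.Prime) (hp13 : 13 < p) :
    let H : Polynomial (ZMod p) :=
      ∑ n ∈ Finset.range p,
        C (∑ k ∈ Finset.range (n + 1), ((n.choose k : ZMod p)) ^ 3) * X ^ n
    ∀ m : ℕ, m ≤ p - 1 → H ≠ (X - C (8 : ZMod p)⁻¹) ^ m * (X + 1) ^ (p - 1 - m) := by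
  intro H m hm hH
  have : Fact p.Prime := ⟨hp⟩
  have hcoeff {j : ℕ} (hj : j < p) :
      H.coeff j = ∑ k ∈ range (j + 1), ((j.choose k : ZMod p)) ^ 3 :=
    coeff_sum_range_C_mul_X_pow _ hj
  have hsum : ((m + (p - 1 - m) + 1 : ℕ) : ZMod p) = 0 := by
    rw [show m + (p - 1 - m) + 1 = p by omega, ZMod.natCast_self]
  have h6 : ((6 : ℕ) : ZMod p) = 0 := by
    rw [hH] at hcoeff
    exact_mod_cast six_eq_zero_of_coeff_X_sub_C_inv_eight_pow_mul_X_add_one_pow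
      (by exact_mod_cast hsum)
      (by rw [hcoeff (by omega)]; norm_num)
      (by rw [hcoeff (by omega)]; norm_num [sum_range_succ])
      (by rw [hcoeff (by omega)]; norm_num [sum_range_succ])
  have := Nat.le_of_dvd (by norm_num) ((ZMod.natCast_eq_zero_iff 6 p).mp h6)
  omega
end

section
/- For a prime p ≡ 2 (mod 3) with p > 3, one has Σ_{k=0}^{p-1} C((2p-1)/3, k) · C((p-2)/3, k) ≡ -1 (mod p). -/
/-
With `a = (2p-1)/3` and `b = (p-2)/3` we have `a + b = p - 1` and `b < p`, so Vandermonde's identity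
turns the sum into `C(p-1, b)`. Modulo `p`, Pascal's rule and `p ∣ C(p, k+1)` give
`C(p-1, k) ≡ (-1)^k` for `k < p`, and `b` is odd because `p ≡ 5 (mod 6)`.
-/

open Finset

theorem Nat.sum_range_choose_mul_choose {m n N : ℕ} (hn : n < N) :
    ∑ k ∈ range N, m.choose k * n.choose k = (m + n).choose n := by
  have tail : ∑ k ∈ Ico (n + 1) N, m.choose k * n.choose k = 0 :=
    sum_eq_zero fun k hk ↦ by rw [Nat.choose_eq_zero_of_lt (mem_Ico.mp hk).1, mul_zero]
  rw [← sum_range_add_sum_Ico _ hn, tail, add_zero, Nat.add_choose_eq,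
    Nat.sum_antidiagonal_eq_sum_range_succ_mk]
  refine sum_congr rfl fun k hk ↦ ?_
  rw [Nat.choose_symm (mem_range_succ_iff.mp hk)]

theorem ZMod.natCast_choose_prime_sub_one {p k : ℕ} (hp : p.Prime) (hk : k < p) :
    (((p - 1).choose k : ℕ) : ZMod p) = (-1) ^ k := by
  induction k with
  | zero => simp
  | succ k ih =>
    have pascal : (p - 1).choose k + (p - 1).choose (k + 1) = p.choose (k + 1) := by
      rw [← Nat.choose_succ_succ', Nat.sub_add_cancel hp.one_le]
    have hdvd : ((p.choose (k + 1) : ℕ) : ZMod p) = 0 :=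
      (ZMod.natCast_eq_zero_iff _ _).mpr (hp.dvd_choose_self k.succ_ne_zero hk)
    rw [← pascal, Nat.cast_add, ih (by omega)] at hdvd
    rw [pow_succ]
    linear_combination hdvd

theorem chu_vandermonde_mod_p_two (p : ℕ) (hp : p.Prime) (h3 : p % 3 = 2) (hp3 : 3 < p) :
    (∑ k ∈ Finset.range p,
        (((2 * p - 1) / 3).choose k : ZMod p) * (((p - 2) / 3).choose k : ZMod p)) = -1 := by
  have hb : (p - 2) / 3 < p := by omega
  have hab : (2 * p - 1) / 3 + (p - 2) / 3 = p - 1 := by omega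
  have hb_odd : Odd ((p - 2) / 3) := by
    have := Nat.odd_iff.mp (hp.odd_of_ne_two (by omega))
    exact Nat.odd_iff.mpr (by omega)
  calc (∑ k ∈ range p, (((2 * p - 1) / 3).choose k : ZMod p) * (((p - 2) / 3).choose k : ZMod p))
      = ((∑ k ∈ range p, ((2 * p - 1) / 3).choose k * ((p - 2) / 3).choose k : ℕ) : ZMod p) := by
        push_cast; rfl
    _ = (((p - 1).choose ((p - 2) / 3) : ℕ) : ZMod p) := by
        rw [Nat.sum_range_choose_mul_choose hb, hab]
    _ = -1 := by rw [ZMod.natCast_choose_prime_sub_one hp hb, hb_odd.neg_one_pow]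
end

section
/- Over ℚ, the Franel generating series satisfies (1-2x)·h(x) = ₂F₁(1/3, 2/3; 1; y) where y = 27x²/(1-2x)³; equivalently, Σ_{n≥0} F_n xⁿ = (1-2x)^{-1} Σ_{k≥0} ((1/3)_k (2/3)_k / (k!)²) (27x²/(1-2x)³)^k as formal power series in x. -/
/-!
The `k`-th term of the right side is `(1/3)_k (2/3)_k 27^k / k!²` times `x^{2k} (1-2x)^{-3k-1}`.
The scalar is `(3k)!/k!³ = C(3k,k) C(2k,k)`, and rescaling `Σ C(d+m,d) x^m = (1-x)^{-d-1}` by `2`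
gives the `n`-th coefficient `2^{n-2k} C(n+k,3k)` of the power series. So the theorem is the
binomial identity `Σ_j C(n,j)³ = Σ_k C(n+k,k) C(n,k) C(n-k,k) 2^{n-2k}`. This follows from
Surányi's identity `C(n,j)² = Σ_k C(j,k) C(n-j,k) C(n+k,k)` together with
`Σ_j C(n,j) C(j,k) C(n-j,k) = C(n,k) C(n-k,k) 2^{n-2k}`: choose two disjoint `k`-sets and then
any subset of the remaining `n-2k` elements.
-/

open Finset PowerSeries

theorem Finset.sum_range_eq_sum_range_sub_shift {M : Type*} [AddCommMonoid M] {f : ℕ → M}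
    {i : ℕ} (hf : ∀ k < i, f k = 0) (n : ℕ) :
    ∑ k ∈ range n, f k = ∑ m ∈ range (n - i), f (i + m) := by
  rcases le_total i n with hin | hni
  · rw [← sum_range_add_sum_Ico f hin, sum_eq_zero fun k hk => hf k (mem_range.1 hk), zero_add,
      sum_Ico_eq_sum_range]
  · rw [Nat.sub_eq_zero_of_le hni, sum_range_zero]
    exact sum_eq_zero fun k hk => hf k ((mem_range.1 hk).trans_le hni)

namespace Nat

theorem choose_mul_choose_sub_comm (n s t : ℕ) :
    n.choose s * (n - s).choose t = n.choose t * (n - t).choose s := by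
  calc n.choose s * (n - s).choose t = n.choose (s + t) * (s + t).choose s := by
        rw [choose_mul (le_add_right s t), add_tsub_cancel_left]
    _ = n.choose (t + s) * (t + s).choose t := by rw [add_comm s t, choose_symm_add]
    _ = n.choose t * (n - t).choose s := by
        rw [choose_mul (le_add_right t s), add_tsub_cancel_left]

theorem add_choose_eq_sum_range (m n k : ℕ) :
    (m + n).choose k = ∑ i ∈ range (k + 1), m.choose i * n.choose (k - i) := by
  rw [add_choose_eq, Finset.Nat.sum_antidiagonal_eq_sum_range_succ_mk]

theorem add_choose_right_eq_sum_choose_mul_choose (m k : ℕ) :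
    (m + k).choose k = ∑ i ∈ range (k + 1), m.choose i * k.choose i := by
  rw [add_choose_eq_sum_range]
  exact sum_congr rfl fun i hi => by rw [choose_symm (mem_range_succ_iff.1 hi)]

theorem sum_choose_mul_choose_mul_choose {a i : ℕ} (hia : i ≤ a) (b : ℕ) :
    ∑ k ∈ range (a + 1), a.choose k * b.choose k * k.choose i
      = b.choose i * (a + (b - i)).choose (a - i) := by
  rw [sum_range_eq_sum_range_sub_shift (fun k hk => by rw [choose_eq_zero_of_lt hk, mul_zero]),
    add_comm a (b - i), add_choose_eq_sum_range, mul_sum, show a + 1 - i = a - i + 1 by omega]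
  refine sum_congr rfl fun m hm => ?_
  have him : i + m ≤ a := by have := mem_range_succ_iff.1 hm; omega
  rw [mul_assoc, choose_mul (le_add_right i m), add_tsub_cancel_left, ← choose_symm him,
    Nat.sub_sub]
  ring

theorem sum_choose_mul_choose_mul_add_choose (a b : ℕ) :
    ∑ k ∈ range (a + 1), a.choose k * b.choose k * (a + b + k).choose k
      = (a + b).choose a ^ 2 := by
  have vandermonde : ∀ k ≤ a,
      (a + b + k).choose k = ∑ i ∈ range (a + 1), (a + b).choose i * k.choose i := by
    intro k hk
    rw [add_choose_right_eq_sum_choose_mul_choose, ← eventually_constant_sum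
      (fun i hi => by rw [choose_eq_zero_of_lt hi, mul_zero]) (by omega : k + 1 ≤ a + 1)]
  have collapse : ∀ i ≤ a, (a + b).choose i * (b.choose i * (a + (b - i)).choose (a - i))
      = (a + b).choose a * (a.choose i * b.choose i) := by
    intro i hia
    rcases le_or_gt i b with hib | hbi
    · rw [show a + (b - i) = a + b - i by omega, mul_left_comm, ← choose_mul hia]
      ring
    · rw [choose_eq_zero_of_lt hbi]
      ring
  calc ∑ k ∈ range (a + 1), a.choose k * b.choose k * (a + b + k).choose k
      = ∑ k ∈ range (a + 1), ∑ i ∈ range (a + 1),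
          (a + b).choose i * (a.choose k * b.choose k * k.choose i) := by
        refine sum_congr rfl fun k hk => ?_
        rw [vandermonde k (mem_range_succ_iff.1 hk), mul_sum]
        exact sum_congr rfl fun i _ => by ring
    _ = ∑ i ∈ range (a + 1), (a + b).choose a * (a.choose i * b.choose i) := by
        rw [sum_comm]
        refine sum_congr rfl fun i hi => ?_
        rw [← mul_sum, sum_choose_mul_choose_mul_choose (mem_range_succ_iff.1 hi),
          collapse i (mem_range_succ_iff.1 hi)]
    _ = (a + b).choose a ^ 2 := by
        rw [← mul_sum, sq, add_comm a b, add_choose_right_eq_sum_choose_mul_choose]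
        simp_rw [mul_comm]

theorem sum_choose_mul_choose_mul_sub_choose {k n : ℕ} (hkn : k ≤ n) :
    ∑ j ∈ range (n + 1), n.choose j * (j.choose k * (n - j).choose k)
      = n.choose k * (n - k).choose k * 2 ^ (n - 2 * k) := by
  have term : ∀ m, n.choose (k + m) * ((k + m).choose k * (n - (k + m)).choose k)
      = n.choose k * (n - k).choose k * (n - 2 * k).choose m := by
    intro m
    rw [← mul_assoc, choose_mul (le_add_right k m), add_tsub_cancel_left, ← Nat.sub_sub,
      mul_assoc, choose_mul_choose_sub_comm (n - k) m k, Nat.sub_sub, ← two_mul]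
    ring
  rw [sum_range_eq_sum_range_sub_shift
      (fun j hj => by rw [choose_eq_zero_of_lt hj, zero_mul, mul_zero]),
    sum_congr rfl fun m _ => term m, ← mul_sum, ← sum_range_choose (n - 2 * k),
    eventually_constant_sum (N := n - 2 * k + 1) (fun m hm => choose_eq_zero_of_lt hm)
      (by omega)]

theorem add_choose_mul_choose_mul_sub_choose (n k : ℕ) :
    (n + k).choose k * (n.choose k * (n - k).choose k)
      = (3 * k).choose k * (2 * k).choose k * (n + k).choose (3 * k) := by
  have h₁ : (n + k).choose (3 * k) * (3 * k).choose k = (n + k).choose k * n.choose (2 * k) := by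
    rw [choose_mul (by omega : k ≤ 3 * k)]
    congr 2 <;> omega
  have h₂ : n.choose (2 * k) * (2 * k).choose k = n.choose k * (n - k).choose k := by
    rw [choose_mul (by omega : k ≤ 2 * k)]
    congr 2
    omega
  rw [← h₂, ← mul_assoc, ← h₁]
  ring

theorem sum_range_choose_pow_three (n : ℕ) :
    ∑ j ∈ range (n + 1), n.choose j ^ 3 = ∑ k ∈ range (n + 1),
      (3 * k).choose k * (2 * k).choose k * (n + k).choose (3 * k) * 2 ^ (n - 2 * k) := by
  have choose_sq : ∀ j ≤ n, n.choose j ^ 2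
      = ∑ k ∈ range (n + 1), (n + k).choose k * (j.choose k * (n - j).choose k) := by
    intro j hj
    obtain ⟨b, rfl⟩ := Nat.exists_eq_add_of_le hj
    rw [add_tsub_cancel_left, ← sum_choose_mul_choose_mul_add_choose,
      ← eventually_constant_sum (u := fun k => j.choose k * b.choose k * (j + b + k).choose k)
        (N := j + 1) (fun k hk => by rw [choose_eq_zero_of_lt hk, zero_mul, zero_mul])
        (by omega : j + 1 ≤ j + b + 1)]
    exact sum_congr rfl fun k _ => by ring
  calc ∑ j ∈ range (n + 1), n.choose j ^ 3
      = ∑ j ∈ range (n + 1), ∑ k ∈ range (n + 1),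
          (n + k).choose k * (n.choose j * (j.choose k * (n - j).choose k)) := by
        refine sum_congr rfl fun j hj => ?_
        rw [show n.choose j ^ 3 = n.choose j * n.choose j ^ 2 by ring,
          choose_sq j (mem_range_succ_iff.1 hj), mul_sum]
        exact sum_congr rfl fun k _ => by ring
    _ = _ := by
        rw [sum_comm]
        refine sum_congr rfl fun k hk => ?_
        rw [← mul_sum, sum_choose_mul_choose_mul_sub_choose (mem_range_succ_iff.1 hk),
          ← add_choose_mul_choose_mul_sub_choose]
        ring

theorem factorial_three_mul (k : ℕ) :
    (3 * k)! = (3 * k).choose k * (2 * k).choose k * k ! ^ 3 := by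
  have h₁ := add_choose_mul_factorial_mul_factorial (2 * k) k
  have h₂ := add_choose_mul_factorial_mul_factorial k k
  rw [show 3 * k = 2 * k + k by ring, ← h₁, two_mul, ← h₂]
  ring

end Nat

open Nat in
theorem prod_add_third_mul_prod_add_two_thirds_mul_factorial (k : ℕ) :
    (∏ i ∈ range k, ((1 : ℚ) / 3 + i)) * (∏ i ∈ range k, ((2 : ℚ) / 3 + i)) * 27 ^ k
      * k ! = (3 * k)! := by
  induction k with
  | zero => simp
  | succ k ih =>
    rw [prod_range_succ, prod_range_succ, show 3 * (k + 1) = 3 * k + 1 + 1 + 1 by ring]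
    simp only [factorial_succ]
    push_cast
    linear_combination ((1 / 3 + k) * (2 / 3 + k) * 27 * (k + 1) : ℚ) * ih

open Nat in
theorem prod_add_third_mul_prod_add_two_thirds_div_sq_mul (k : ℕ) :
    (∏ i ∈ range k, ((1 : ℚ) / 3 + i)) * (∏ i ∈ range k, ((2 : ℚ) / 3 + i))
      / (k ! : ℚ) ^ 2 * 27 ^ k = (3 * k).choose k * (2 * k).choose k := by
  have hk : (k ! : ℚ) ≠ 0 := by positivity
  have h := prod_add_third_mul_prod_add_two_thirds_mul_factorial k
  rw [factorial_three_mul] at h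
  push_cast at h
  rw [div_mul_eq_mul_div, div_eq_iff (pow_ne_zero 2 hk)]
  apply mul_right_cancel₀ hk
  linear_combination h

theorem PowerSeries.coeff_inv_one_sub_C_mul_X_pow_succ {K : Type*} [Field K] (a : K) (d m : ℕ) :
    coeff m (((1 - C a * X)⁻¹) ^ (d + 1)) = a ^ m * (d + m).choose d := by
  have hQ : constantCoeff ((1 - C a * X) ^ (d + 1)) ≠ 0 := by simp
  have hP : ((1 - C a * X)⁻¹) ^ (d + 1) * (1 - C a * X) ^ (d + 1) = 1 := by
    rw [← mul_pow, PowerSeries.inv_mul_cancel _ (by simp), one_pow]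
  have hR : rescale a (mk fun n => ((d + n).choose d : K)) * (1 - C a * X) ^ (d + 1) = 1 := by
    simpa [rescale_X] using congrArg (rescale a) (mk_add_choose_mul_one_sub_pow_eq_one K d)
  rw [(eq_inv_iff_mul_eq_one hQ).2 hP, ← (eq_inv_iff_mul_eq_one hQ).2 hR, coeff_rescale,
    coeff_mk]

theorem PowerSeries.coeff_X_pow_mul_inv_one_sub_C_mul_X_pow {K : Type*} [Field K] (a : K)
    (k n : ℕ) :
    coeff n (X ^ (2 * k) * ((1 - C a * X)⁻¹) ^ (3 * k + 1))
      = a ^ (n - 2 * k) * (n + k).choose (3 * k) := by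
  rw [coeff_X_pow_mul', coeff_inv_one_sub_C_mul_X_pow_succ]
  split_ifs
  · rw [show 3 * k + (n - 2 * k) = n + k by omega]
  · rw [Nat.choose_eq_zero_of_lt (by omega), Nat.cast_zero, mul_zero]

theorem coeff_franel_hypergeometric_term (c : ℚ) (k n : ℕ) :
    coeff n ((1 - 2 * X)⁻¹ * (C c * (27 * X ^ 2 * ((1 - 2 * X)⁻¹) ^ 3) ^ k))
      = c * 27 ^ k * (n + k).choose (3 * k) * 2 ^ (n - 2 * k) := by
  rw [mul_assoc (c * 27 ^ k), mul_comm _ ((2 : ℚ) ^ _),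
    ← coeff_X_pow_mul_inv_one_sub_C_mul_X_pow, ← coeff_C_mul, map_ofNat]
  congr 1
  simp only [map_mul, map_pow, map_ofNat]
  ring

open PowerSeries in
/-- Since `y = 27x²/(1-2x)³` has order `2k` at the `k`-th power, the `n`-th coefficient of the
hypergeometric sum only involves terms with `k ≤ n`, so the identity is stated
coefficient-wise with the sum truncated at `k = n`. -/
theorem franel_series_hypergeometric :
    let h : PowerSeries ℚ :=
      PowerSeries.mk fun n => ∑ k ∈ Finset.range (n + 1), ((n.choose k : ℚ)) ^ 3
    let y : PowerSeries ℚ := 27 * X ^ 2 * ((1 - 2 * X)⁻¹) ^ 3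
    ∀ n : ℕ,
      PowerSeries.coeff (R := ℚ) n h =
        PowerSeries.coeff (R := ℚ) n
          ((1 - 2 * X)⁻¹ *
            ∑ k ∈ Finset.range (n + 1),
              PowerSeries.C (R := ℚ)
                  ((∏ i ∈ Finset.range k, ((1 : ℚ) / 3 + i)) *
                    (∏ i ∈ Finset.range k, ((2 : ℚ) / 3 + i)) / (k.factorial : ℚ) ^ 2) *
                y ^ k) := by
  intro h y n
  simp only [h, y, coeff_mk, mul_sum, map_sum, coeff_franel_hypergeometric_term,
    prod_add_third_mul_prod_add_two_thirds_div_sq_mul]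
  exact_mod_cast Nat.sum_range_choose_pow_three n
end
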